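/- In every maximal strongly connected component of a progress DFA of the colorful FDFA, either all states are accepting or all states are rejecting. Equivalently: if states q_x and q_y (reached by words x and y) lie in the same SCC of the colorful progress DFA for u, then col_u(x) = col_u(y). -/

import Mathlib

open scoped Classical

/-- Concatenation of a finite word with an infinite word. -/
def wcat {A : Type} (u : List A) (w : ℕ → A) : ℕ → A :=
  fun n => if h : n < u.length then u.get ⟨n, h⟩ else w (n - u.length)

/-- The infinite periodic word `v^ω`. -/
def wpow {A : Type} [Inhabited A] (v : List A) : ℕ → A :=
  fun n => v.getD (n % v.length) default

/-- The ultimately periodic word `u · v^ω`. -/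
def upw {A : Type} [Inhabited A] (u v : List A) : ℕ → A := wcat u (wpow v)

/-- The finite word `v^i`. -/
def wrep {A : Type} (v : List A) (i : ℕ) : List A := (List.replicate i v).flatten

/-- The right congruence `x ∼_L y`. -/
def simL {A : Type} (L : Set (ℕ → A)) (x y : List A) : Prop :=
  ∀ w : ℕ → A, wcat x w ∈ L ↔ wcat y w ∈ L

/-- `w` is `u`-invariant: `u ∼_L u·w`. -/
def UInv {A : Type} (L : Set (ℕ → A)) (u w : List A) : Prop := simL L u (u ++ w)

/-- `v` is relevant to `u`. -/
def URel {A : Type} (L : Set (ℕ → A)) (u v : List A) : Prop :=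
  ∃ z : List A, UInv L u (v ++ z)

/-- `v` has natural color at most `c` wrt `u`. -/
def ColorAtMost {A : Type} [Inhabited A] (L : Set (ℕ → A)) (u : List A) :
    ℕ → List A → Prop
  | c, v => ∀ z : List A, UInv L u (v ++ z) →
      ((upw u (v ++ z) ∈ L ↔ Even c) ∨
        ∃ i : ℕ, 0 < i ∧ ∃ c' : Fin c, ColorAtMost L u c' (wrep (v ++ z) i))
  termination_by c => c
  decreasing_by exact c'.isLt

/-- The natural color of the finite word `v` wrt `u`: `⊥` (i.e. `-∞`) if `v` is
irrelevant to `u`, and otherwise the minimal `c ≥ 0` as in the paper. -/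
noncomputable def ncol {A : Type} [Inhabited A] (L : Set (ℕ → A)) (u v : List A) :
    WithBot ℕ :=
  if URel L u v then ((sInf {c : ℕ | ColorAtMost L u c v} : ℕ) : WithBot ℕ) else ⊥

/-- `v` is stable wrt `u`. -/
def Stable {A : Type} [Inhabited A] (L : Set (ℕ → A)) (u v : List A) : Prop :=
  ∀ i : ℕ, 0 < i → ncol L u v = ncol L u (wrep v i)

/-- `v` is `u`-reliable. -/
def UReliable {A : Type} [Inhabited A] (L : Set (ℕ → A)) (u v : List A) : Prop :=
  UInv L u v ∧ Stable L u v

/-- The natural color of an ultimately periodic infinite word. -/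
noncomputable def icol {A : Type} [Inhabited A] (L : Set (ℕ → A)) (w : ℕ → A) : ℕ :=
  sInf {c : ℕ | ∃ u v : List A, v ≠ [] ∧ w = upw u v ∧ UInv L u v ∧
    ncol L u v = (c : WithBot ℕ)}

/-- The set of states visited infinitely often by a run. -/
def infSet {Q : Type} (r : ℕ → Q) : Set Q := {q | ∀ n : ℕ, ∃ m : ℕ, n ≤ m ∧ r m = q}

/-- The run of a complete deterministic automaton on an infinite word. -/
def runOf {A Q : Type} (δ : Q → A → Q) (q0 : Q) (w : ℕ → A) : ℕ → Q
  | 0 => q0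
  | n + 1 => δ (runOf δ q0 w n) (w n)

/-- `L` is ω-regular: recognized by some deterministic Muller automaton. -/
def OmegaRegular {A : Type} (L : Set (ℕ → A)) : Prop :=
  ∃ (Q : Type) (_ : Fintype Q) (q0 : Q) (δ : Q → A → Q) (α : Set (Set Q)),
    ∀ w : ℕ → A, w ∈ L ↔ infSet (runOf δ q0 w) ∈ α


/-- The minimal nonnegative natural color of the language `L`. -/
noncomputable def minColL {A : Type} [Inhabited A] (L : Set (ℕ → A)) : ℕ :=
  sInf {c : ℕ | ∃ u v : List A, v ≠ [] ∧ ncol L u v = (c : WithBot ℕ)}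

/-- The minimal nonnegative natural color of words wrt `u`. -/
noncomputable def minColU {A : Type} [Inhabited A] (L : Set (ℕ → A)) (u : List A) : ℕ :=
  if ({c : ℕ | ∃ v : List A, v ≠ [] ∧ ncol L u v = (c : WithBot ℕ)}).Nonempty then
    sInf {c : ℕ | ∃ v : List A, v ≠ [] ∧ ncol L u v = (c : WithBot ℕ)}
  else minColL L

/-- The recolored natural color, where irrelevant words get the minimal nonnegative
color of `u`: `Col_u(v) = max(col_u(v), mincol(u))`. -/
noncomputable def nCol {A : Type} [Inhabited A] (L : Set (ℕ → A)) (u v : List A) : ℕ :=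
  max (WithBot.unbotD 0 (ncol L u v)) (minColU L u)

/-!
Colors can only decrease when a word is extended, because `ColorAtMost L u c v` passes to every
extension of `v`; so around a cycle `x ⇝ y ⇝ x` of the progress DFA the colors agree. This needs
every nonempty word to have some color (otherwise `ncol` is the junk value `sInf ∅ = 0`), and
this is where ω-regularity enters. Run a Muller automaton for `L`: the transition profiles of
words form a finite monoid, and for an idempotent profile `e` the infinity set of `u · w^ω` is
read off `e`. If extending such a word changes membership, the idempotent profile of a suitable
power of the extension generates a strictly smaller right ideal than `e`, so twice the size of
that ideal, plus a parity bit, is a color.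
-/

section Words

variable {A : Type}

theorem wcat_nil (X : ℕ → A) : wcat [] X = X := by
  funext n
  simp [wcat]

theorem wcat_cons_zero (a : A) (s : List A) (X : ℕ → A) : wcat (a :: s) X 0 = a := by
  simp [wcat]

theorem wcat_cons_succ (a : A) (s : List A) (X : ℕ → A) (n : ℕ) :
    wcat (a :: s) X (n + 1) = wcat s X n := by
  by_cases h : n < s.length <;> simp [wcat, h]

theorem wcat_append (s t : List A) (X : ℕ → A) : wcat (s ++ t) X = wcat s (wcat t X) := by
  induction s with
  | nil => rw [List.nil_append, wcat_nil]
  | cons a s ih =>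
    funext n
    cases n with
    | zero => simp only [List.cons_append, wcat_cons_zero]
    | succ n => rw [List.cons_append, wcat_cons_succ, wcat_cons_succ, ih]

theorem eq_of_wcat_eq_self {s : List A} (hs : s ≠ []) {X Y : ℕ → A}
    (hX : wcat s X = X) (hY : wcat s Y = Y) : X = Y := by
  have hlen : 0 < s.length := List.length_pos_iff.mpr hs
  funext n
  induction n using Nat.strong_induction_on with
  | _ n ih =>
    rw [← hX, ← hY]
    unfold wcat
    split_ifs
    · rfl
    · exact ih _ (by omega)

theorem wrep_succ (v : List A) (i : ℕ) : wrep v (i + 1) = v ++ wrep v i := by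
  simp [wrep, List.replicate_succ]

theorem wrep_ne_nil {v : List A} (hv : v ≠ []) {i : ℕ} (hi : 0 < i) : wrep v i ≠ [] := by
  obtain ⟨j, rfl⟩ := Nat.exists_eq_add_one_of_ne_zero hi.ne'
  simp [wrep_succ, hv]

theorem wcat_wrep_of_wcat_eq_self {v : List A} {X : ℕ → A} (h : wcat v X = X) (i : ℕ) :
    wcat (wrep v i) X = X := by
  induction i with
  | zero => exact wcat_nil X
  | succ i ih => rw [wrep_succ, wcat_append, ih, h]

theorem wcat_wpow [Inhabited A] (v : List A) : wcat v (wpow v) = wpow v := by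
  funext n
  by_cases h : n < v.length
  · simp [wcat, wpow, h, Nat.mod_eq_of_lt h]
  · obtain ⟨m, rfl⟩ := Nat.exists_eq_add_of_le (not_lt.mp h)
    simp [wcat, wpow, h]

theorem wpow_wrep [Inhabited A] {v : List A} (hv : v ≠ []) {i : ℕ} (hi : 0 < i) :
    wpow (wrep v i) = wpow v :=
  eq_of_wcat_eq_self (wrep_ne_nil hv hi) (wcat_wpow _)
    (wcat_wrep_of_wcat_eq_self (wcat_wpow v) i)

theorem upw_wrep [Inhabited A] (u : List A) {v : List A} (hv : v ≠ []) {i : ℕ} (hi : 0 < i) :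
    upw u (wrep v i) = upw u v := by
  rw [upw, upw, wpow_wrep hv hi]

variable {L : Set (ℕ → A)} {u : List A}

theorem UInv.append {a b : List A} (ha : UInv L u a) (hb : UInv L u b) : UInv L u (a ++ b) := by
  intro X
  rw [← List.append_assoc, wcat_append (u ++ a)]
  exact (hb X).trans (by rw [wcat_append]; exact ha (wcat b X))

theorem UInv.wrep {v : List A} (hv : UInv L u v) (i : ℕ) : UInv L u (wrep v i) := by
  induction i with
  | zero => intro X; simp [_root_.wrep]
  | succ i ih => rw [wrep_succ]; exact hv.append ih

theorem URel.of_append {v z : List A} (h : URel L u (v ++ z)) : URel L u v := by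
  obtain ⟨z', hz'⟩ := h
  exact ⟨z ++ z', by rwa [← List.append_assoc]⟩

theorem ColorAtMost.append [Inhabited A] {c : ℕ} {v : List A} (h : ColorAtMost L u c v)
    (z : List A) : ColorAtMost L u c (v ++ z) := by
  rw [ColorAtMost] at h ⊢
  intro z' hz'
  rw [List.append_assoc] at hz' ⊢
  exact h (z ++ z') hz'

end Words

theorem exists_isIdempotentElem_pow {M : Type*} [Monoid M] [Finite M] (x : M) :
    ∃ n, 0 < n ∧ IsIdempotentElem (x ^ n) := by
  obtain ⟨a, b, hab, hpow⟩ := Finite.exists_ne_map_eq_of_infinite (fun n : ℕ => x ^ (n + 1))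
  wlog hlt : a < b generalizing a b
  · exact this b a hab.symm hpow.symm (by omega)
  set k := b - a
  have hperiod : ∀ m, a + 1 ≤ m → x ^ (m + k) = x ^ m := fun m hm => by
    obtain ⟨d, rfl⟩ := Nat.exists_eq_add_of_le hm
    have hbk : a + 1 + k = b + 1 := by omega
    rw [add_right_comm, pow_add, hbk, ← hpow, ← pow_add]
  have hiter : ∀ j m, a + 1 ≤ m → x ^ (m + j * k) = x ^ m := fun j m hm => by
    induction j with
    | zero => simp
    | succ j ih => rw [add_mul, one_mul, ← add_assoc, hperiod _ (by omega), ih]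
  have hk : 0 < k := by omega
  refine ⟨(a + 1) * k, Nat.mul_pos (by omega) hk, ?_⟩
  rw [IsIdempotentElem, ← pow_add, hiter _ _ (Nat.le_mul_of_pos_right _ hk)]

theorem ncard_range_mul_lt_of_mul_eq {M : Type*} [Semigroup M] [Finite M] {e f : M}
    (he : IsIdempotentElem e) (hf : IsIdempotentElem f) (hef : e * f = f) (hfe : f * e ≠ e) :
    (Set.range (f * ·)).ncard < (Set.range (e * ·)).ncard := by
  refine Set.ncard_lt_ncard (Set.ssubset_iff_of_subset ?_ |>.mpr ⟨e, ⟨e, he⟩, ?_⟩)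
  · rintro _ ⟨g, rfl⟩
    exact ⟨f * g, show e * (f * g) = f * g by rw [← mul_assoc, hef]⟩
  · rintro ⟨g, hg⟩
    exact hfe (by rw [← hg, ← mul_assoc, hf.eq])

/-- The effect of a word on a deterministic automaton: for each start state, the state reached
and the set of states entered on the way. -/
def Profile (Q : Type) : Type := (Q → Q) × (Q → Set Q)

namespace Profile

variable {Q : Type}

instance : Monoid (Profile Q) where
  mul x y := (y.1 ∘ x.1, fun q => x.2 q ∪ y.2 (x.1 q))
  mul_assoc _ _ _ := Prod.ext rfl (funext fun _ => Set.union_assoc _ _ _)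
  one := (id, fun _ => ∅)
  one_mul _ := Prod.ext rfl (funext fun _ => Set.empty_union _)
  mul_one _ := Prod.ext rfl (funext fun _ => Set.union_empty _)

instance [Finite Q] : Finite (Profile Q) := inferInstanceAs (Finite ((Q → Q) × (Q → Set Q)))

@[simp] theorem mul_fst (x y : Profile Q) : (x * y).1 = y.1 ∘ x.1 := rfl

@[simp] theorem mul_snd (x y : Profile Q) (q : Q) : (x * y).2 q = x.2 q ∪ y.2 (x.1 q) := rfl

/-- For idempotent `e`, the infinity set of a run that repeats `e` forever from `q`. -/
def loop (e : Profile Q) (q : Q) : Set Q := e.2 (e.1 q)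

theorem loop_mul_comm {x y : Profile Q} (h : IsIdempotentElem (x * y)) (q : Q) :
    loop (x * y) q = loop (y * x) (x.1 q) := by
  have hfst : y.1 (x.1 (y.1 (x.1 q))) = y.1 (x.1 q) := congrFun (congrArg Prod.fst h) q
  simp only [loop, mul_fst, mul_snd, Function.comp_apply, hfst]
  exact Set.union_comm _ _

theorem loop_eq_of_mul_eq {e f : Profile Q} (hef : e * f = f) (hfe : f * e = e) (q : Q) :
    loop f q = loop e q := by
  have he : IsIdempotentElem e := by
    rw [IsIdempotentElem]
    nth_rw 2 [← hfe]
    rw [← mul_assoc, hef, hfe]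
  have hf : IsIdempotentElem f := by
    rw [IsIdempotentElem]
    nth_rw 2 [← hef]
    rw [← mul_assoc, hfe, hef]
  calc loop f q = loop (e * f) q := by rw [hef]
    _ = loop (f * e) (e.1 q) := loop_mul_comm (by rw [hef]; exact hf) q
    _ = loop e q := by rw [hfe, loop, loop, ← Function.comp_apply (f := e.1), ← mul_fst, he.eq]

variable {A : Type} (δ : Q → A → Q)

def letter (a : A) : Profile Q := (fun q => δ q a, fun q => {δ q a})

def ofWord (l : List A) : Profile Q := (l.map (letter δ)).prod

@[simp] theorem ofWord_cons (a : A) (l : List A) :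
    ofWord δ (a :: l) = letter δ a * ofWord δ l := by
  simp [ofWord]

theorem ofWord_append (s t : List A) : ofWord δ (s ++ t) = ofWord δ s * ofWord δ t := by
  simp [ofWord]

theorem ofWord_wrep (v : List A) (i : ℕ) : ofWord δ (wrep v i) = ofWord δ v ^ i := by
  induction i with
  | zero => rfl
  | succ i ih => rw [wrep_succ, ofWord_append, ih, pow_succ']

end Profile

section Runs

open Profile

variable {A Q : Type} (δ : Q → A → Q)

theorem runOf_succ' (q : Q) (X : ℕ → A) (n : ℕ) :
    runOf δ q X (n + 1) = runOf δ (δ q (X 0)) (fun k => X (k + 1)) n := by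
  induction n with
  | zero => rfl
  | succ n ih => rw [runOf, ih]; rfl

theorem runOf_wcat_length_add (s : List A) (X : ℕ → A) (q : Q) (n : ℕ) :
    runOf δ q (wcat s X) (s.length + n) = runOf δ ((ofWord δ s).1 q) X n := by
  induction s generalizing q with
  | nil => rw [wcat_nil, List.length_nil, zero_add]; rfl
  | cons a s ih =>
    have hshift : (fun k => wcat (a :: s) X (k + 1)) = wcat s X := funext (wcat_cons_succ a s X)
    rw [List.length_cons, add_right_comm, runOf_succ', wcat_cons_zero, hshift, ih]
    rfl

theorem ofWord_snd_eq_image_runOf (s : List A) (X : ℕ → A) (q : Q) :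
    (ofWord δ s).2 q = (fun j => runOf δ q (wcat s X) (j + 1)) '' Set.Iio s.length := by
  induction s generalizing q with
  | nil => show ∅ = _; simp
  | cons a s ih =>
    have hshift : (fun k => wcat (a :: s) X (k + 1)) = wcat s X := funext (wcat_cons_succ a s X)
    have hrun : ∀ j, runOf δ q (wcat (a :: s) X) (j + 1) = runOf δ (δ q a) (wcat s X) j :=
      fun j => by rw [runOf_succ', wcat_cons_zero, hshift]
    ext p
    rw [ofWord_cons, mul_snd, ih]
    simp only [letter, Set.mem_union, Set.mem_singleton_iff, Set.mem_image, Set.mem_Iio,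
      List.length_cons, hrun]
    constructor
    · rintro (hp | ⟨j, hj, rfl⟩)
      · exact ⟨0, by omega, hp.symm⟩
      · exact ⟨j + 1, by omega, rfl⟩
    · rintro ⟨_ | j, hj, rfl⟩
      · exact Or.inl rfl
      · exact Or.inr ⟨j, by omega, rfl⟩

end Runs

section InfSet

variable {Q : Type}

theorem infSet_comp_add (r : ℕ → Q) (N : ℕ) : infSet (fun n => r (n + N)) = infSet r := by
  ext q
  constructor
  · intro h n
    obtain ⟨m, hm, hq⟩ := h n
    exact ⟨m + N, by omega, hq⟩
  · intro h n
    obtain ⟨m, hm, hq⟩ := h (n + N)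
    exact ⟨m - N, by omega, show r (m - N + N) = q by rwa [Nat.sub_add_cancel (by omega)]⟩

theorem infSet_eq_image_of_periodic {r : ℕ → Q} {p : ℕ} (hr : Function.Periodic r p)
    (hp : 0 < p) : infSet r = r '' Set.Iio p := by
  ext q
  constructor
  · intro h
    obtain ⟨m, -, rfl⟩ := h 0
    exact ⟨m % p, Nat.mod_lt m hp, hr.map_mod_nat m⟩
  · rintro ⟨j, -, rfl⟩ n
    exact ⟨j + n * p, by nlinarith, hr.nat_mul n j⟩

theorem infSet_runOf_wcat {A : Type} (δ : Q → A → Q) (q : Q) (u w : List A) (X : ℕ → A)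
    (hw : w ≠ []) (hX : wcat w X = X) (he : IsIdempotentElem (Profile.ofWord δ w)) :
    infSet (runOf δ q (wcat u X)) = (Profile.ofWord δ w).loop ((Profile.ofWord δ u).1 q) := by
  set e := Profile.ofWord δ w
  set p := e.1 ((Profile.ofWord δ u).1 q)
  have hlen : 0 < w.length := List.length_pos_iff.mpr hw
  have hstep : ∀ q' n, runOf δ q' X (w.length + n) = runOf δ (e.1 q') X n := fun q' n => by
    rw [← runOf_wcat_length_add, hX]
  have hp : e.1 p = p := congrFun (congrArg Prod.fst he) _
  have hperiodic : Function.Periodic (fun n => runOf δ p X (n + 1)) w.length := fun n => by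
    show runOf δ p X (n + w.length + 1) = runOf δ p X (n + 1)
    rw [add_right_comm, add_comm _ w.length, hstep, hp]
  calc infSet (runOf δ q (wcat u X))
      = infSet (fun n => runOf δ q (wcat u X) (n + (u.length + w.length))) :=
        (infSet_comp_add _ _).symm
    _ = infSet (runOf δ p X) := by
        congr 1
        funext n
        rw [add_comm n, add_assoc, runOf_wcat_length_add, hstep]
    _ = infSet (fun n => runOf δ p X (n + 1)) := (infSet_comp_add _ 1).symm
    _ = (Profile.ofWord δ w).2 p := by
        rw [infSet_eq_image_of_periodic hperiodic hlen, ofWord_snd_eq_image_runOf δ w X p, hX]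

section NaturalColors

open Profile

variable {A Q : Type} [Inhabited A]

theorem upw_mem_iff_loop_mem {δ : Q → A → Q} {q0 : Q} {α : Set (Set Q)} {L : Set (ℕ → A)}
    (hL : ∀ X, X ∈ L ↔ infSet (runOf δ q0 X) ∈ α) (u : List A) {w : List A} (hw : w ≠ [])
    (he : IsIdempotentElem (ofWord δ w)) :
    upw u w ∈ L ↔ (ofWord δ w).loop ((ofWord δ u).1 q0) ∈ α := by
  rw [hL, upw, infSet_runOf_wcat δ q0 u w _ hw (wcat_wpow w) he]

theorem IsIdempotentElem.mul_mul_pow_eq {M : Type*} [Monoid M] {e : M}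
    (he : IsIdempotentElem e) (g : M) {i : ℕ} (hi : 0 < i) : e * (e * g) ^ i = (e * g) ^ i := by
  obtain ⟨j, rfl⟩ := Nat.exists_eq_add_one_of_ne_zero hi.ne'
  rw [pow_succ', ← mul_assoc, ← mul_assoc, he.eq]

/-- The parity records whether `u · w^ω ∈ L`; the size of the right ideal generated by the
profile of `w` bounds how often membership can still change along extensions. -/
noncomputable def profileColor (δ : Q → A → Q) (L : Set (ℕ → A)) (u w : List A) : ℕ :=
  2 * (Set.range (ofWord δ w * ·)).ncard + if upw u w ∈ L then 0 else 1

variable (δ : Q → A → Q) (L : Set (ℕ → A)) (u : List A)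

theorem even_profileColor_iff (w : List A) : Even (profileColor δ L u w) ↔ upw u w ∈ L := by
  unfold profileColor
  split_ifs with h <;> simp [h]

theorem profileColor_lt_card [Finite Q] (w : List A) :
    profileColor δ L u w < 2 * Nat.card (Profile Q) + 2 := by
  have := Set.ncard_le_card (Set.range (ofWord δ w * ·))
  unfold profileColor
  split_ifs <;> omega

theorem profileColor_wrep_lt [Finite Q] {q0 : Q} {α : Set (Set Q)}
    (hL : ∀ X, X ∈ L ↔ infSet (runOf δ q0 X) ∈ α) {w : List A} (hw : w ≠ [])
    (he : IsIdempotentElem (ofWord δ w)) (z : List A) {i : ℕ} (hi : 0 < i)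
    (hidem : IsIdempotentElem (ofWord δ (wrep (w ++ z) i)))
    (hchange : ¬(upw u (w ++ z) ∈ L ↔ upw u w ∈ L)) :
    profileColor δ L u (wrep (w ++ z) i) < profileColor δ L u w := by
  have hwz : w ++ z ≠ [] := by simp [hw]
  have hef : ofWord δ w * ofWord δ (wrep (w ++ z) i) = ofWord δ (wrep (w ++ z) i) := by
    rw [ofWord_wrep, ofWord_append, he.mul_mul_pow_eq _ hi]
  have hfe : ofWord δ (wrep (w ++ z) i) * ofWord δ w ≠ ofWord δ w := fun hfe => hchange <| by
    rw [← upw_wrep u hwz hi, upw_mem_iff_loop_mem hL u (wrep_ne_nil hwz hi) hidem,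
      upw_mem_iff_loop_mem hL u hw he, loop_eq_of_mul_eq hef hfe]
  have := ncard_range_mul_lt_of_mul_eq he hidem hef hfe
  unfold profileColor
  split_ifs <;> omega

theorem colorAtMost_profileColor [Finite Q] {q0 : Q} {α : Set (Set Q)}
    (hL : ∀ X, X ∈ L ↔ infSet (runOf δ q0 X) ∈ α) {w : List A} (hw : w ≠ [])
    (hinv : UInv L u w) (he : IsIdempotentElem (ofWord δ w)) :
    ColorAtMost L u (profileColor δ L u w) w := by
  induction hc : profileColor δ L u w using Nat.strong_induction_on generalizing w with
  | _ c ih =>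
    rw [ColorAtMost]
    intro z hz
    by_cases hsame : upw u (w ++ z) ∈ L ↔ upw u w ∈ L
    · exact Or.inl (by rw [hsame, ← hc, even_profileColor_iff])
    · obtain ⟨i, hi, hidem⟩ := exists_isIdempotentElem_pow (ofWord δ (w ++ z))
      rw [← ofWord_wrep] at hidem
      have hlt := profileColor_wrep_lt δ L u hL hw he z hi hidem hsame
      rw [hc] at hlt
      exact Or.inr ⟨i, hi, ⟨_, hlt⟩,
        ih _ hlt (wrep_ne_nil (by simp [hw]) hi) (hz.wrep i) hidem rfl⟩

theorem exists_colorAtMost [Finite Q] {q0 : Q} {α : Set (Set Q)}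
    (hL : ∀ X, X ∈ L ↔ infSet (runOf δ q0 X) ∈ α) {v : List A} (hv : v ≠ []) :
    ∃ c, ColorAtMost L u c v := by
  refine ⟨2 * Nat.card (Profile Q) + 2, ?_⟩
  rw [ColorAtMost]
  intro z hz
  obtain ⟨i, hi, hidem⟩ := exists_isIdempotentElem_pow (ofWord δ (v ++ z))
  rw [← ofWord_wrep] at hidem
  exact Or.inr ⟨i, hi, ⟨_, profileColor_lt_card δ L u _⟩,
    colorAtMost_profileColor δ L u hL (wrep_ne_nil (by simp [hv]) hi) (hz.wrep i) hidem⟩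

end NaturalColors

theorem ncol_append_le {A : Type} [Inhabited A] {L : Set (ℕ → A)} {u v : List A}
    (hv : ∃ c, ColorAtMost L u c v) (z : List A) : ncol L u (v ++ z) ≤ ncol L u v := by
  unfold ncol
  by_cases hrel : URel L u (v ++ z)
  · rw [if_pos hrel, if_pos hrel.of_append]
    exact WithBot.coe_le_coe.mpr (Nat.sInf_le ((Nat.sInf_mem hv).append z))
  · rw [if_neg hrel]
    exact bot_le

theorem OmegaRegular.nCol_append_le {A : Type} [Inhabited A] {L : Set (ℕ → A)}
    (hreg : OmegaRegular L) (u : List A) {v : List A} (hv : v ≠ []) (z : List A) :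
    nCol L u (v ++ z) ≤ nCol L u v := by
  obtain ⟨Q, _, q0, δ, α, hL⟩ := hreg
  refine max_le_max_right _ ?_
  by_cases hbot : ncol L u (v ++ z) = ⊥
  · simp [hbot]
  · exact WithBot.unbotD_mono hbot (ncol_append_le (exists_colorAtMost δ L u hL hv) z)

/-- states in the same SCC of a colorful progress DFA agree on
acceptance, i.e. words reaching the same SCC have the same (recolored) color. -/
theorem colorful_scc_same_color {A : Type} [Inhabited A] (L : Set (ℕ → A))
    (hreg : OmegaRegular L) (u x y : List A) (hx : x ≠ []) (hy : y ≠ [])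
    (z₁ z₂ : List A)
    (h1 : ∀ z : List A, nCol L u (x ++ z₁ ++ z) = nCol L u (y ++ z))
    (h2 : ∀ z : List A, nCol L u (y ++ z₂ ++ z) = nCol L u (x ++ z)) :
    nCol L u x = nCol L u y := by
  have hxy : nCol L u (x ++ z₁) = nCol L u y := by simpa using h1 []
  have hyx : nCol L u (y ++ z₂) = nCol L u x := by simpa using h2 []
  have := hreg.nCol_append_le u hx z₁
  have := hreg.nCol_append_le u hy z₂
  omega
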